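/- arXiv:1912.10964 — 4 statements merged into one kernel-verified Lean document; each statement's English description precedes it below -/
import Mathlib

section
/- Let f : [0,1]^d → ℝ^d be a continuous function such that for every i ∈ {1,…,d} and every x ∈ [0,1]^d with x_i = 0 we have (f(x))_i ≤ 0, and for every x ∈ [0,1]^d with x_i = 1 we have (f(x))_i ≥ 1. Then the image f([0,1]^d) contains the cube [0,1]^d. -/
/-!
Subtracting the target point `y` reduces the claim to the Poincaré–Miranda theorem: a continuous
`g` on `[0,1]^d` with `g x i ≤ 0` on the face `x i = 0` and `g x i ≥ 0` on the face `x i = 1` has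
a zero. Cut the cube into the Kuhn simplices of the grid `(1/N) ℤ^d` and label a grid point `x` by
`i.rev` for the largest `i` with `0 < g x i` or `x i = 1`, and by `d` if there is none. The
boundary conditions make this a Sperner labelling, so some simplex carries all the labels
`0, …, d`. At its vertex labelled `d` every coordinate of `g` is `≤ 0`, while `g _ i ≥ 0` at its
vertex labelled `i.rev`; once `N` is large, uniform continuity makes `‖g‖` small at the former, and
compactness turns approximate zeros into a zero.

Sperner's lemma (an odd number of fully labelled simplices) is the door argument, by induction on
`d`: modulo 2, the fully labelled simplices are counted by the pairs (simplex, facet labelled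
`0, …, d - 1`); the pairs across an interior facet come in twos, and those on the boundary of
`[0, n]^d` all lie on the face `v 0 = n`, where they are the fully labelled simplices of that face.
-/

open Finset Function Equiv

namespace Sperner

section Doors

variable {N : ℕ} (L : Fin (N + 1) → ℕ)

def IsFullyLabeled : Prop := range (N + 1) ⊆ univ.image L

def IsDoor (k : Fin (N + 1)) : Prop := range N ⊆ univ.image (L ∘ k.succAbove)

instance : Decidable (IsFullyLabeled L) := by unfold IsFullyLabeled; infer_instance

instance : DecidablePred (IsDoor L) := fun _ => by unfold IsDoor; infer_instance

variable {L}

lemma isDoor_iff {k : Fin (N + 1)} : IsDoor L k ↔ ∀ j < N, ∃ m ≠ k, L m = j := by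
  refine forall_congr' fun j => ?_
  rw [mem_range]
  refine imp_congr_right fun _ => ⟨fun h => ?_, ?_⟩
  · obtain ⟨i, -, rfl⟩ := mem_image.mp h
    exact ⟨k.succAbove i, k.succAbove_ne i, rfl⟩
  · rintro ⟨m, hmk, rfl⟩
    obtain ⟨i, rfl⟩ := Fin.exists_succAbove_eq hmk
    exact mem_image_of_mem _ (mem_univ i)

lemma IsFullyLabeled.injective (hL : IsFullyLabeled L) : Injective L := by
  have hcard : #(univ.image L) = #(univ : Finset (Fin (N + 1))) :=
    le_antisymm card_image_le (by simpa using card_le_card hL)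
  simpa using card_image_iff.mp hcard

lemma filter_isDoor_eq_singleton (hle : ∀ m, L m ≤ N) (hL : IsFullyLabeled L)
    {k₀ : Fin (N + 1)} (hk₀ : L k₀ = N) : ({k | IsDoor L k} : Finset _) = {k₀} := by
  ext k
  simp only [mem_filter_univ, mem_singleton, isDoor_iff]
  refine ⟨fun hk => hL.injective ?_, ?_⟩
  · by_contra hne
    obtain ⟨m, hmk, hm⟩ := hk (L k) (lt_of_le_of_ne (hle k) (hk₀ ▸ hne))
    exact hmk (hL.injective hm)
  · rintro rfl j hj
    obtain ⟨m, -, hm⟩ := mem_image.mp (hL (mem_range.mpr (hj.trans N.lt_succ_self)))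
    exact ⟨m, by rintro rfl; omega, hm⟩

lemma filter_isDoor_eq_empty (hL : ¬ range N ⊆ univ.image L) :
    ({k | IsDoor L k} : Finset _) = ∅ :=
  filter_false_of_mem fun _ _ hk => hL (hk.trans (image_subset_iff.mpr fun _ _ =>
    mem_image_of_mem L (mem_univ _)))

lemma filter_isDoor_eq_pair (hcov : range N ⊆ univ.image L) {a b : Fin (N + 1)}
    (hab : a ≠ b) (hL : L a = L b) : ({k | IsDoor L k} : Finset _) = {a, b} := by
  ext k
  simp only [mem_filter_univ, mem_insert, mem_singleton]
  refine ⟨fun hk => ?_, ?_⟩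
  · by_contra! hne
    obtain ⟨a', rfl⟩ := Fin.exists_succAbove_eq hne.1.symm
    obtain ⟨b', rfl⟩ := Fin.exists_succAbove_eq hne.2.symm
    have hlt : #(univ.image (L ∘ k.succAbove)) < N := by
      refine (card_image_le.lt_of_ne fun h => ?_).trans_eq (card_fin N)
      exact hab (congrArg _ ((card_image_iff.mp h) (mem_univ a') (mem_univ b') hL))
    simpa using (card_le_card hk).trans_lt hlt
  · intro hk
    refine isDoor_iff.mpr fun j hj => ?_
    obtain ⟨m, -, rfl⟩ := mem_image.mp (hcov (mem_range.mpr hj))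
    by_cases hm : m = k
    · subst hm
      rcases hk with rfl | rfl
      exacts [⟨b, hab.symm, hL.symm⟩, ⟨a, hab, hL⟩]
    · exact ⟨m, hm, rfl⟩

theorem card_isDoor_mod_two (hle : ∀ m, L m ≤ N) :
    (#{k | IsDoor L k} : ZMod 2) = if IsFullyLabeled L then 1 else 0 := by
  split_ifs with hL
  · obtain ⟨k₀, -, hk₀⟩ := mem_image.mp (hL (self_mem_range_succ N))
    simp [filter_isDoor_eq_singleton hle hL hk₀]
  by_cases hcov : range N ⊆ univ.image L
  · have hN : N ∉ univ.image L := fun h => hL (by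
      rw [IsFullyLabeled, range_add_one]; exact insert_subset h hcov)
    have hmaps : ∀ m ∈ univ, L m ∈ range N := fun m _ => mem_range.mpr <|
      (hle m).lt_of_ne fun h => hN (mem_image.mpr ⟨m, mem_univ m, h⟩)
    obtain ⟨a, -, b, -, hab, hLab⟩ := exists_ne_map_eq_of_card_lt_of_maps_to (by simp) hmaps
    rw [filter_isDoor_eq_pair hcov hab hLab, card_pair hab]
    rfl
  · simp [filter_isDoor_eq_empty hcov]

end Doors

variable {d n : ℕ}

abbrev KuhnCell (d : ℕ) := (Fin d → ℕ) × Perm (Fin d)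

def kuhnCells (d n : ℕ) : Finset (KuhnCell d) := Fintype.piFinset (fun _ => range n) ×ˢ univ

/-- Vertex `k` of the Kuhn simplex `s = (z, π)` is `z + e (π 0) + ⋯ + e (π (k - 1))`. -/
def kuhnVertex (s : KuhnCell d) (k : Fin (d + 1)) : Fin d → ℕ :=
  fun i => s.1 i + if (s.2.symm i : ℕ) < k then 1 else 0

lemma mem_kuhnCells {s : KuhnCell d} : s ∈ kuhnCells d n ↔ ∀ i, s.1 i < n := by
  simp [kuhnCells]

lemma kuhnVertex_le {s : KuhnCell d} (hs : s ∈ kuhnCells d n) (k : Fin (d + 1)) (i : Fin d) :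
    kuhnVertex s k i ≤ n := by
  have := mem_kuhnCells.mp hs i
  unfold kuhnVertex
  split_ifs <;> omega

lemma kuhnVertex_le_add_one (s : KuhnCell d) (a b : Fin (d + 1)) (i : Fin d) :
    kuhnVertex s a i ≤ kuhnVertex s b i + 1 := by
  unfold kuhnVertex
  split_ifs <;> omega

lemma kuhnVertex_succ_apply_zero (s : KuhnCell (d + 1)) (j : Fin (d + 1)) :
    kuhnVertex s j.succ (s.2 0) = s.1 (s.2 0) + 1 := by
  simp [kuhnVertex]

lemma kuhnVertex_castSucc_apply_last (s : KuhnCell (d + 1)) (j : Fin (d + 1)) :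
    kuhnVertex s j.castSucc (s.2 (Fin.last d)) = s.1 (s.2 (Fin.last d)) := by
  simp [kuhnVertex, Fin.is_le]

def cellLabels (ℓ : (Fin d → ℕ) → ℕ) (s : KuhnCell d) : Fin (d + 1) → ℕ :=
  fun k => ℓ (kuhnVertex s k)

/-- Coordinate `i` owns the label `i.rev` rather than `i`, so that the face `v 0 = n` is again
Sperner labelled, with the same labels (`IsSpernerLabeling.cons`). -/
structure IsSpernerLabeling (n : ℕ) (ℓ : (Fin d → ℕ) → ℕ) : Prop where
  le : ∀ v : Fin d → ℕ, (∀ i, v i ≤ n) → ℓ v ≤ d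
  ne_rev : ∀ v : Fin d → ℕ, (∀ i, v i ≤ n) → ∀ i, v i = 0 → ℓ v ≠ i.rev
  le_rev : ∀ v : Fin d → ℕ, (∀ i, v i ≤ n) → ∀ i, v i = n → ℓ v ≤ i.rev

lemma IsSpernerLabeling.cons {ℓ : (Fin (d + 1) → ℕ) → ℕ} (hℓ : IsSpernerLabeling n ℓ) :
    IsSpernerLabeling n fun w : Fin d → ℕ => ℓ (Fin.cons n w) := by
  have hv {w : Fin d → ℕ} (hw : ∀ i, w i ≤ n) : ∀ i, (Fin.cons n w : Fin (d + 1) → ℕ) i ≤ n :=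
    Fin.cases le_rfl hw
  refine ⟨fun w hw => ?_, fun w hw i hi => ?_, fun w hw i hi => ?_⟩
  · simpa using hℓ.le_rev _ (hv hw) 0 rfl
  · simpa [Fin.rev_succ] using hℓ.ne_rev _ (hv hw) i.succ hi
  · simpa [Fin.rev_succ] using hℓ.le_rev _ (hv hw) i.succ hi

lemma card_isFullyLabeled_mod_two {ℓ : (Fin d → ℕ) → ℕ} (hℓ : IsSpernerLabeling n ℓ) :
    (#{s ∈ kuhnCells d n | IsFullyLabeled (cellLabels ℓ s)} : ZMod 2) =
      #{t ∈ kuhnCells d n ×ˢ univ | IsDoor (cellLabels ℓ t.1) t.2} := by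
  rw [card_filter, card_filter, sum_product, Nat.cast_sum, Nat.cast_sum]
  refine sum_congr rfl fun s hs => ?_
  rw [← card_filter,
    card_isDoor_mod_two (L := cellLabels ℓ s) fun k => hℓ.le _ (kuhnVertex_le hs k)]
  split_ifs <;> simp

section Pivot

def rotateUp (s : KuhnCell (d + 1)) : KuhnCell (d + 1) :=
  (update s.1 (s.2 0) (s.1 (s.2 0) + 1), s.2 * finRotate (d + 1))

def rotateDown (s : KuhnCell (d + 1)) : KuhnCell (d + 1) :=
  (update s.1 (s.2 (Fin.last d)) (s.1 (s.2 (Fin.last d)) - 1), s.2 * (finRotate (d + 1))⁻¹)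

lemma kuhnVertex_rotateUp (s : KuhnCell (d + 1)) (j : Fin (d + 1)) :
    kuhnVertex (rotateUp s) j.castSucc = kuhnVertex s j.succ := by
  funext i
  have hsymm : (rotateUp s).2.symm i = (finRotate (d + 1)).symm (s.2.symm i) := rfl
  simp only [kuhnVertex, hsymm, Fin.val_castSucc, Fin.val_succ]
  by_cases hi : s.2.symm i = 0
  · obtain rfl : i = s.2 0 := by rw [← hi, apply_symm_apply]
    rw [hi, finRotate_symm_apply, zero_sub, Fin.coe_neg_one]
    simp [rotateUp, Fin.is_le]
  · have hi' : i ≠ s.2 0 := fun h => hi (by rw [h, symm_apply_apply])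
    have := Fin.pos_of_ne_zero hi
    simp only [rotateUp, update_of_ne hi', coe_finRotate_symm_of_ne_zero hi]
    congr 2
    exact propext (by omega)

lemma rotateDown_rotateUp (s : KuhnCell (d + 1)) : rotateDown (rotateUp s) = s := by
  simp [rotateDown, rotateUp]

lemma rotateDown_snd_zero (s : KuhnCell (d + 1)) : (rotateDown s).2 0 = s.2 (Fin.last d) := by
  simp [rotateDown, Fin.ext_iff, Fin.coe_neg_one]

lemma rotateDown_apply_zero (s : KuhnCell (d + 1)) :
    (rotateDown s).1 ((rotateDown s).2 0) = s.1 (s.2 (Fin.last d)) - 1 := by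
  rw [rotateDown_snd_zero]
  simp [rotateDown]

lemma rotateUp_rotateDown {s : KuhnCell (d + 1)} (hs : 0 < s.1 (s.2 (Fin.last d))) :
    rotateUp (rotateDown s) = s := by
  ext : 1
  · simp only [rotateUp, rotateDown_snd_zero]
    simp [rotateDown, Nat.sub_add_cancel hs]
  · simp [rotateDown, rotateUp]

lemma kuhnVertex_rotateDown {s : KuhnCell (d + 1)} (hs : 0 < s.1 (s.2 (Fin.last d)))
    (j : Fin (d + 1)) : kuhnVertex (rotateDown s) j.succ = kuhnVertex s j.castSucc := by
  rw [← kuhnVertex_rotateUp, rotateUp_rotateDown hs]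

lemma kuhnVertex_mul_swap (s : KuhnCell d) {k : Fin (d + 1)} (h0 : k ≠ 0) (hl : k ≠ Fin.last d)
    {m : Fin (d + 1)} (hm : m ≠ k) :
    kuhnVertex (s.1, s.2 * swap (k.pred h0) (k.castPred hl)) m = kuhnVertex s m := by
  funext i
  have hsymm : (s.2 * swap (k.pred h0) (k.castPred hl)).symm i =
      swap (k.pred h0) (k.castPred hl) (s.2.symm i) := rfl
  have hmk := Fin.val_ne_iff.mpr hm
  have hk0 : (k : ℕ) ≠ 0 := Fin.val_ne_iff.mpr h0
  simp only [kuhnVertex, hsymm]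
  congr 2
  rcases eq_or_ne (s.2.symm i) (k.pred h0) with h | h
  · rw [h, swap_apply_left]
    simp only [Fin.val_pred, Fin.coe_castPred]
    exact propext (by omega)
  rcases eq_or_ne (s.2.symm i) (k.castPred hl) with h' | h'
  · rw [h', swap_apply_right]
    simp only [Fin.val_pred, Fin.coe_castPred]
    exact propext (by omega)
  · rw [swap_apply_of_ne_of_ne h h']

/-- For `t = (s, k)`: the other Kuhn simplex containing the facet of `s` opposite vertex `k`,
together with the index of that facet in it. -/
def pivot (t : KuhnCell (d + 1) × Fin (d + 2)) : KuhnCell (d + 1) × Fin (d + 2) :=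
  if h0 : t.2 = 0 then (rotateUp t.1, Fin.last _)
  else if hl : t.2 = Fin.last _ then (rotateDown t.1, 0)
  else ((t.1.1, t.1.2 * swap (t.2.pred h0) (t.2.castPred hl)), t.2)

/-- For `t = (s, k)`: the facet of `s` opposite vertex `k` is not on the boundary of
`[0, n]^(d+1)` (facets `0 < k < d + 1` never are). -/
def IsInteriorFacet (n : ℕ) (t : KuhnCell (d + 1) × Fin (d + 2)) : Prop :=
  (t.2 = 0 → t.1.1 (t.1.2 0) + 1 < n) ∧ (t.2 = Fin.last _ → 0 < t.1.1 (t.1.2 (Fin.last d)))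

instance : DecidablePred (IsInteriorFacet (d := d) n) :=
  fun _ => by unfold IsInteriorFacet; infer_instance

lemma pivot_zero (s : KuhnCell (d + 1)) : pivot (s, 0) = (rotateUp s, Fin.last _) := by
  simp [pivot]

lemma pivot_last (s : KuhnCell (d + 1)) : pivot (s, Fin.last _) = (rotateDown s, 0) := by
  simp [pivot]

lemma pivot_of_ne (s : KuhnCell (d + 1)) {k : Fin (d + 2)} (h0 : k ≠ 0) (hl : k ≠ Fin.last _) :
    pivot (s, k) = ((s.1, s.2 * swap (k.pred h0) (k.castPred hl)), k) := by
  simp [pivot, h0, hl]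

lemma kuhnVertex_pivot {t : KuhnCell (d + 1) × Fin (d + 2)} (ht : IsInteriorFacet n t)
    (j : Fin (d + 1)) :
    kuhnVertex (pivot t).1 ((pivot t).2.succAbove j) = kuhnVertex t.1 (t.2.succAbove j) := by
  obtain ⟨s, k⟩ := t
  rcases eq_or_ne k 0 with rfl | h0
  · simp [pivot_zero, kuhnVertex_rotateUp]
  rcases eq_or_ne k (Fin.last _) with rfl | hl
  · simp [pivot_last, kuhnVertex_rotateDown (ht.2 rfl)]
  · rw [pivot_of_ne s h0 hl]
    exact kuhnVertex_mul_swap s h0 hl (Fin.succAbove_ne k j)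

lemma pivot_pivot {t : KuhnCell (d + 1) × Fin (d + 2)} (ht : IsInteriorFacet n t) :
    pivot (pivot t) = t := by
  obtain ⟨s, k⟩ := t
  rcases eq_or_ne k 0 with rfl | h0
  · simp [pivot_zero, pivot_last, rotateDown_rotateUp]
  rcases eq_or_ne k (Fin.last _) with rfl | hl
  · simp [pivot_zero, pivot_last, rotateUp_rotateDown (ht.2 rfl)]
  · simp [pivot_of_ne _ h0 hl, mul_assoc]

lemma pivot_ne (t : KuhnCell (d + 1) × Fin (d + 2)) : pivot t ≠ t := by
  obtain ⟨s, k⟩ := t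
  rcases eq_or_ne k 0 with rfl | h0
  · simp [pivot_zero]
  rcases eq_or_ne k (Fin.last _) with rfl | hl
  · simp [pivot_last]
  · rw [pivot_of_ne _ h0 hl]
    intro h
    have := congrArg (fun t => t.1.2 (k.pred h0)) h
    simp only [Perm.mul_apply, swap_apply_left, EmbeddingLike.apply_eq_iff_eq, Fin.ext_iff,
      Fin.coe_castPred, Fin.val_pred] at this
    have hk0 : (k : ℕ) ≠ 0 := Fin.val_ne_iff.mpr h0
    omega

lemma pivot_mem {t : KuhnCell (d + 1) × Fin (d + 2)} (hs : t.1 ∈ kuhnCells (d + 1) n)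
    (ht : IsInteriorFacet n t) :
    (pivot t).1 ∈ kuhnCells (d + 1) n ∧ IsInteriorFacet n (pivot t) := by
  obtain ⟨s, k⟩ := t
  rw [mem_kuhnCells] at hs ⊢
  rcases eq_or_ne k 0 with rfl | h0
  · have h := ht.1 rfl
    refine ⟨fun i => ?_, by simp [IsInteriorFacet, pivot_zero, rotateUp]⟩
    rcases eq_or_ne i (s.2 0) with rfl | hi
    · simpa [pivot_zero, rotateUp] using h
    · simpa [pivot_zero, rotateUp, hi] using hs i
  rcases eq_or_ne k (Fin.last _) with rfl | hl
  · have h := ht.2 rfl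
    refine ⟨fun i => ?_, ?_⟩
    · rcases eq_or_ne i (s.2 (Fin.last d)) with rfl | hi
      · simpa [pivot_last, rotateDown] using (hs _).trans_le' (Nat.sub_le _ 1)
      · simpa [pivot_last, rotateDown, hi] using hs i
    · simpa [IsInteriorFacet, pivot_last, rotateDown_apply_zero, Nat.sub_add_cancel h] using hs _
  · rw [pivot_of_ne _ h0 hl]
    exact ⟨hs, fun h => absurd h h0, fun h => absurd h hl⟩

end Pivot

section Boundary

def faceCell (t : KuhnCell (d + 1) × Fin (d + 2)) : KuhnCell d :=
  (Fin.tail t.1.1, (Perm.decomposeFin t.1.2).2)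

def boundaryFlag (n : ℕ) (s : KuhnCell d) : KuhnCell (d + 1) × Fin (d + 2) :=
  ((Fin.cons (n - 1) s.1, Perm.decomposeFin.symm (0, s.2)), 0)

lemma faceCell_boundaryFlag (s : KuhnCell d) : faceCell (boundaryFlag n s) = s := by
  simp [faceCell, boundaryFlag]

lemma decomposeFin_fst (π : Perm (Fin (d + 1))) : (Perm.decomposeFin π).1 = π 0 := by
  conv_rhs => rw [← Perm.decomposeFin.symm_apply_apply π]
  exact (Perm.decomposeFin_symm_apply_zero _ _).symm

lemma kuhnVertex_cons (a : ℕ) (s : KuhnCell d) (j : Fin (d + 1)) :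
    kuhnVertex (Fin.cons a s.1, Perm.decomposeFin.symm (0, s.2)) j.succ =
      Fin.cons (a + 1) (kuhnVertex s j) := by
  have h0 : (Perm.decomposeFin.symm (0, s.2)).symm 0 = 0 := by
    rw [symm_apply_eq, Perm.decomposeFin_symm_apply_zero]
  have hsucc (x : Fin d) :
      (Perm.decomposeFin.symm (0, s.2)).symm x.succ = (s.2.symm x).succ := by
    rw [symm_apply_eq, Perm.decomposeFin_symm_apply_succ, swap_self, refl_apply,
      apply_symm_apply]
  funext i
  cases i using Fin.cases with
  | zero => simp [kuhnVertex, h0]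
  | succ i => simp [kuhnVertex, hsucc]

variable {ℓ : (Fin (d + 1) → ℕ) → ℕ}

lemma isDoor_boundaryFlag_iff (hn : 0 < n) (s : KuhnCell d) :
    IsDoor (cellLabels ℓ (boundaryFlag n s).1) (boundaryFlag n s).2 ↔
      IsFullyLabeled (cellLabels (fun w => ℓ (Fin.cons n w)) s) := by
  have : cellLabels ℓ (boundaryFlag n s).1 ∘ (boundaryFlag n s).2.succAbove =
      cellLabels (fun w => ℓ (Fin.cons n w)) s := by
    funext j
    simp [boundaryFlag, cellLabels, kuhnVertex_cons, Nat.sub_add_cancel hn]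
  rw [IsDoor, this, IsFullyLabeled]

lemma not_isDoor_last (hℓ : IsSpernerLabeling n ℓ) {s : KuhnCell (d + 1)}
    (hs : s ∈ kuhnCells (d + 1) n) (hz : s.1 (s.2 (Fin.last d)) = 0) :
    ¬ IsDoor (cellLabels ℓ s) (Fin.last _) := by
  intro hdoor
  obtain ⟨j, -, hj⟩ := mem_image.mp <| hdoor <| mem_range.mpr (s.2 (Fin.last d)).rev.is_lt
  refine hℓ.ne_rev _ (kuhnVertex_le hs _) _ ?_ hj
  simpa [Fin.succAbove_last, kuhnVertex_castSucc_apply_last] using hz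

lemma eq_zero_of_isDoor_zero (hℓ : IsSpernerLabeling n ℓ) {s : KuhnCell (d + 1)}
    (hs : s ∈ kuhnCells (d + 1) n) (hz : s.1 (s.2 0) + 1 = n)
    (hdoor : IsDoor (cellLabels ℓ s) 0) : s.2 0 = 0 := by
  obtain ⟨j, -, hj⟩ := mem_image.mp <| hdoor <| self_mem_range_succ d
  have := hℓ.le_rev _ (kuhnVertex_le hs j.succ) (s.2 0) (by rw [kuhnVertex_succ_apply_zero, hz])
  simp only [comp_apply, Fin.succAbove_zero, cellLabels] at hj
  rw [hj, Fin.val_rev] at this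
  exact Fin.ext (by rw [Fin.val_zero]; omega)

lemma boundaryFlag_faceCell (hℓ : IsSpernerLabeling n ℓ) {t : KuhnCell (d + 1) × Fin (d + 2)}
    (hs : t.1 ∈ kuhnCells (d + 1) n) (hdoor : IsDoor (cellLabels ℓ t.1) t.2)
    (hb : ¬ IsInteriorFacet n t) : boundaryFlag n (faceCell t) = t := by
  obtain ⟨⟨z, π⟩, k⟩ := t
  simp only [IsInteriorFacet, not_and_or, Classical.not_imp, not_lt, Nat.le_zero] at hb
  rcases hb with ⟨rfl, hz⟩ | ⟨rfl, hz⟩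
  · have hz : z (π 0) + 1 = n := le_antisymm (mem_kuhnCells.mp hs _) hz
    have hπ : π 0 = 0 := eq_zero_of_isDoor_zero hℓ hs hz hdoor
    rw [hπ] at hz
    rw [boundaryFlag, faceCell, show n - 1 = z 0 by omega, Fin.cons_self_tail, ← hπ,
      ← decomposeFin_fst, Prod.mk.eta, symm_apply_apply]
  · exact absurd hdoor (not_isDoor_last hℓ hs hz)

lemma card_boundary_doors (hn : 0 < n) (hℓ : IsSpernerLabeling n ℓ) :
    #{t ∈ kuhnCells (d + 1) n ×ˢ univ | IsDoor (cellLabels ℓ t.1) t.2 ∧ ¬ IsInteriorFacet n t} =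
      #{s ∈ kuhnCells d n | IsFullyLabeled (cellLabels (fun w => ℓ (Fin.cons n w)) s)} := by
  refine card_nbij' faceCell (boundaryFlag n) (fun t ht => ?_) (fun s hs => ?_)
    (fun t ht => ?_) (fun s _ => faceCell_boundaryFlag s)
  · simp only [coe_filter, mem_product, mem_univ, and_true, Set.mem_ofPred_eq] at ht ⊢
    obtain ⟨hs, hdoor, hb⟩ := ht
    rw [← boundaryFlag_faceCell hℓ hs hdoor hb, isDoor_boundaryFlag_iff hn] at hdoor
    exact ⟨mem_kuhnCells.mpr fun i => mem_kuhnCells.mp hs i.succ, hdoor⟩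
  · simp only [coe_filter, mem_product, mem_univ, and_true, Set.mem_ofPred_eq] at hs ⊢
    refine ⟨mem_kuhnCells.mpr (Fin.cases (Nat.sub_lt hn one_pos) (mem_kuhnCells.mp hs.1)),
      (isDoor_boundaryFlag_iff hn s).mpr hs.2, ?_⟩
    simp [boundaryFlag, IsInteriorFacet, Perm.decomposeFin_symm_apply_zero, Nat.sub_add_cancel hn]
  · simp only [coe_filter, mem_product, mem_univ, and_true, Set.mem_ofPred_eq] at ht
    exact boundaryFlag_faceCell hℓ ht.1 ht.2.1 ht.2.2

lemma isDoor_pivot {t : KuhnCell (d + 1) × Fin (d + 2)} (ht : IsInteriorFacet n t) :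
    IsDoor (cellLabels ℓ (pivot t).1) (pivot t).2 ↔ IsDoor (cellLabels ℓ t.1) t.2 := by
  have : cellLabels ℓ (pivot t).1 ∘ (pivot t).2.succAbove = cellLabels ℓ t.1 ∘ t.2.succAbove :=
    funext fun j => by simp [cellLabels, kuhnVertex_pivot ht]
  rw [IsDoor, IsDoor, this]

lemma card_interior_doors_mod_two :
    (#{t ∈ kuhnCells (d + 1) n ×ˢ univ | IsDoor (cellLabels ℓ t.1) t.2 ∧ IsInteriorFacet n t} :
      ZMod 2) = 0 := by
  rw [card_eq_sum_ones, Nat.cast_sum, Nat.cast_one]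
  refine sum_involution (fun t _ => pivot t) (fun _ _ => by decide) (fun t _ _ => pivot_ne t)
    (fun t ht => ?_) (fun t ht => pivot_pivot (mem_filter.mp ht).2.2)
  simp only [mem_filter, mem_product, mem_univ, and_true] at ht ⊢
  obtain ⟨hs, hdoor, hint⟩ := ht
  exact ⟨(pivot_mem hs hint).1, (isDoor_pivot hint).mpr hdoor, (pivot_mem hs hint).2⟩

end Boundary

theorem odd_card_isFullyLabeled (hn : 0 < n) {ℓ : (Fin d → ℕ) → ℕ}
    (hℓ : IsSpernerLabeling n ℓ) : Odd #{s ∈ kuhnCells d n | IsFullyLabeled (cellLabels ℓ s)} := by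
  induction d with
  | zero =>
    have hfull : ∀ s ∈ kuhnCells 0 n, IsFullyLabeled (cellLabels ℓ s) := fun s hs => by
      simpa [IsFullyLabeled, cellLabels, eq_comm] using hℓ.le _ (kuhnVertex_le hs 0)
    rw [filter_true_of_mem hfull]
    simp [kuhnCells]
  | succ d ih =>
    rw [← ZMod.natCast_eq_one_iff_odd, card_isFullyLabeled_mod_two hℓ,
      ← card_filter_add_card_filter_not (IsInteriorFacet n), filter_filter, filter_filter,
      Nat.cast_add, card_interior_doors_mod_two, card_boundary_doors hn hℓ,
      ZMod.natCast_eq_one_iff_odd.mpr (ih hℓ.cons), zero_add]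

end Sperner

namespace PoincareMiranda

open Sperner

variable {d : ℕ}

def minRevLabel (P : Finset (Fin d)) : ℕ :=
  (insert d (P.image fun i => (i.rev : ℕ))).min' (insert_nonempty _ _)

lemma minRevLabel_le (P : Finset (Fin d)) : minRevLabel P ≤ d :=
  min'_le _ _ (mem_insert_self _ _)

lemma minRevLabel_le_rev {P : Finset (Fin d)} {i : Fin d} (hi : i ∈ P) :
    minRevLabel P ≤ i.rev :=
  min'_le _ _ (mem_insert_of_mem (mem_image_of_mem _ hi))

lemma mem_of_minRevLabel_eq_rev {P : Finset (Fin d)} {i : Fin d} (h : minRevLabel P = i.rev) :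
    i ∈ P := by
  have hmem := min'_mem (insert d (P.image fun i => (i.rev : ℕ))) (insert_nonempty _ _)
  rw [← minRevLabel, h, Finset.mem_insert, mem_image] at hmem
  rcases hmem with hd | ⟨j, hj, hji⟩
  · exact absurd hd i.rev.is_lt.ne
  · rwa [← Fin.rev_injective (Fin.ext hji)]

lemma notMem_of_minRevLabel_eq {P : Finset (Fin d)} (h : minRevLabel P = d) (i : Fin d) :
    i ∉ P := fun hi => by
  have := minRevLabel_le_rev hi
  have := i.rev.is_lt
  omega

noncomputable def gridPoint (N : ℕ) (v : Fin d → ℕ) : Fin d → ℝ := fun i => v i / N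

lemma gridPoint_mem_Icc {N : ℕ} {v : Fin d → ℕ} (hv : ∀ i, v i ≤ N) :
    gridPoint N v ∈ Set.Icc 0 1 :=
  ⟨fun _ => div_nonneg (Nat.cast_nonneg _) (Nat.cast_nonneg _),
    fun i => div_le_one_of_le₀ (Nat.cast_le.mpr (hv i)) (Nat.cast_nonneg N)⟩

lemma dist_gridPoint_kuhnVertex_le (N : ℕ) (s : KuhnCell d) (a b : Fin (d + 1)) :
    dist (gridPoint N (kuhnVertex s a)) (gridPoint N (kuhnVertex s b)) ≤ 1 / N := by
  refine (dist_pi_le_iff (by positivity)).mpr fun i => ?_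
  have hab : (kuhnVertex s a i : ℝ) ≤ kuhnVertex s b i + 1 := by
    exact_mod_cast kuhnVertex_le_add_one s a b i
  have hba : (kuhnVertex s b i : ℝ) ≤ kuhnVertex s a i + 1 := by
    exact_mod_cast kuhnVertex_le_add_one s b a i
  rw [gridPoint, gridPoint, Real.dist_eq, ← sub_div, abs_div, Nat.abs_cast]
  gcongr
  rw [abs_sub_le_iff]
  constructor <;> linarith

variable {g : (Fin d → ℝ) → Fin d → ℝ}

/-- Counting `i` as positive also on the face `x i = 1`, where only `g x i ≥ 0` is known, is what
makes this a Sperner labelling. -/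
noncomputable def mirandaLabel (g : (Fin d → ℝ) → Fin d → ℝ) (x : Fin d → ℝ) : ℕ :=
  open Classical in minRevLabel {i | x i = 1 ∨ 0 < g x i}

lemma isSpernerLabeling_mirandaLabel {N : ℕ} (hN : 0 < N)
    (h0 : ∀ (i : Fin d) (x : Fin d → ℝ), x ∈ Set.Icc 0 1 → x i = 0 → g x i ≤ 0) :
    IsSpernerLabeling N fun v => mirandaLabel g (gridPoint N v) := by
  refine ⟨fun v _ => minRevLabel_le _, fun v hv i hi h => ?_,
    fun v _ i hi => minRevLabel_le_rev ?_⟩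
  · have hx : gridPoint N v i = 0 := by simp [gridPoint, hi]
    rcases (mem_filter_univ _).mp (mem_of_minRevLabel_eq_rev h) with h1 | hpos
    · simp [hx] at h1
    · exact (h0 i _ (gridPoint_mem_Icc hv) hx).not_gt hpos
  · exact (mem_filter_univ _).mpr (Or.inl (by simp [gridPoint, hi, hN.ne']))

theorem exists_norm_lt (hg : ContinuousOn g (Set.Icc 0 1))
    (h0 : ∀ (i : Fin d) (x : Fin d → ℝ), x ∈ Set.Icc 0 1 → x i = 0 → g x i ≤ 0)
    (h1 : ∀ (i : Fin d) (x : Fin d → ℝ), x ∈ Set.Icc 0 1 → x i = 1 → 0 ≤ g x i)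
    {ε : ℝ} (hε : 0 < ε) : ∃ x ∈ Set.Icc (0 : Fin d → ℝ) 1, ‖g x‖ < ε := by
  obtain ⟨δ, hδ, hgδ⟩ := Metric.uniformContinuousOn_iff.mp
    (isCompact_Icc.uniformContinuousOn_of_continuous hg) ε hε
  obtain ⟨N, hN⟩ := exists_nat_one_div_lt hδ
  obtain ⟨s, hs⟩ := card_pos.mp
    (odd_card_isFullyLabeled N.succ_pos (isSpernerLabeling_mirandaLabel N.succ_pos h0)).pos
  obtain ⟨hs, hfull⟩ := mem_filter.mp hs
  set p := fun k => gridPoint (N + 1) (kuhnVertex s k)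
  have hp (k) : p k ∈ Set.Icc 0 1 := gridPoint_mem_Icc (kuhnVertex_le hs k)
  obtain ⟨a, -, ha⟩ := mem_image.mp (hfull (self_mem_range_succ d))
  refine ⟨p a, hp a, (pi_norm_lt_iff hε).mpr fun i => ?_⟩
  obtain ⟨b, -, hb⟩ := mem_image.mp (hfull (mem_range.mpr (i.rev.is_lt.trans d.lt_succ_self)))
  have hneg : g (p a) i ≤ 0 := by
    have := notMem_of_minRevLabel_eq ha i
    simp only [mem_filter_univ, not_or, not_lt] at this
    exact this.2
  have hpos : 0 ≤ g (p b) i := by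
    rcases (mem_filter_univ _).mp (mem_of_minRevLabel_eq_rev hb) with h | h
    exacts [h1 i _ (hp b) h, h.le]
  have hclose : dist (g (p b) i) (g (p a) i) < ε :=
    (dist_le_pi_dist _ _ i).trans_lt <| hgδ _ (hp b) _ (hp a) <|
      (dist_gridPoint_kuhnVertex_le _ s b a).trans_lt (by exact_mod_cast hN)
  rw [Real.dist_eq, abs_lt] at hclose
  rw [Real.norm_eq_abs, abs_lt]
  constructor <;> linarith

theorem exists_eq_zero (hg : ContinuousOn g (Set.Icc 0 1))
    (h0 : ∀ (i : Fin d) (x : Fin d → ℝ), x ∈ Set.Icc 0 1 → x i = 0 → g x i ≤ 0)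
    (h1 : ∀ (i : Fin d) (x : Fin d → ℝ), x ∈ Set.Icc 0 1 → x i = 1 → 0 ≤ g x i) :
    ∃ x ∈ Set.Icc (0 : Fin d → ℝ) 1, g x = 0 := by
  obtain ⟨x₀, hx₀, hmin⟩ :=
    isCompact_Icc.exists_isMinOn (Set.nonempty_Icc.mpr zero_le_one) hg.norm
  refine ⟨x₀, hx₀, norm_le_zero_iff.mp (le_of_forall_pos_lt_add fun ε hε => ?_)⟩
  obtain ⟨x, hx, hgx⟩ := exists_norm_lt hg h0 h1 hε
  exact (hmin hx).trans_lt (by rwa [zero_add])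

end PoincareMiranda

theorem cube_surjectivity_general (d : ℕ) (f : (Fin d → ℝ) → (Fin d → ℝ))
    (hf : ContinuousOn f (Set.Icc 0 1))
    (h0 : ∀ (i : Fin d) (x : Fin d → ℝ), x ∈ Set.Icc 0 1 → x i = 0 → f x i ≤ 0)
    (h1 : ∀ (i : Fin d) (x : Fin d → ℝ), x ∈ Set.Icc 0 1 → x i = 1 → 1 ≤ f x i) :
    Set.Icc (0 : Fin d → ℝ) 1 ⊆ f '' Set.Icc 0 1 := by
  intro y hy
  obtain ⟨x, hx, hxy⟩ := PoincareMiranda.exists_eq_zero (g := fun x => f x - y)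
    (hf.sub continuousOn_const)
    (fun i x hx hi => sub_nonpos.mpr ((h0 i x hx hi).trans (hy.1 i)))
    (fun i x hx hi => sub_nonneg.mpr ((hy.2 i).trans (h1 i x hx hi)))
  exact ⟨x, hx, sub_eq_zero.mp hxy⟩

/-- A continuous function on the unit cube whose i-th coordinate is ≤ 0 on
the face {x_i = 0} and ≥ 1 on the face {x_i = 1} has image containing the cube. -/
theorem cube_surjectivity (d : ℕ) (hd : 1 ≤ d) (f : (Fin d → ℝ) → (Fin d → ℝ))
    (hf : ContinuousOn f (Set.Icc 0 1))
    (h0 : ∀ (i : Fin d) (x : Fin d → ℝ), x ∈ Set.Icc 0 1 → x i = 0 → f x i ≤ 0)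
    (h1 : ∀ (i : Fin d) (x : Fin d → ℝ), x ∈ Set.Icc 0 1 → x i = 1 → 1 ≤ f x i) :
    Set.Icc (0 : Fin d → ℝ) 1 ⊆ f '' Set.Icc 0 1 :=
  cube_surjectivity_general d f hf h0 h1
end

section
/- Let d ≥ 2 and n ≥ 1. Suppose that for each j = 1,…,d, c^{(j)} : [0,1] → ℝ^d is continuous with -n = (c^{(j)}(0))_j ≤ (c^{(j)}(s))_j ≤ (c^{(j)}(1))_j = n for all s ∈ [0,1], and (c^{(j)}(s))_i ∈ [0,n] for all s ∈ [0,1] and all i ≠ j. Define g : [0,1]^d → ℝ^d by (g(t))_i = (c^{(i)}(t_i))_i + h_{d-1}((c^{(1)}(t_1))_i, …, (c^{(i-1)}(t_{i-1}))_i, (c^{(i+1)}(t_{i+1}))_i, …, (c^{(d)}(t_d))_i), where h_k is the iterated absolute-difference function (h_1(x)=|x|, h_k(x) = |h_{k-1}(x_1,…,x_{k-1}) - x_k|). Then g is continuous, and for every t ∈ [0,1]^d: (g(t))_i ≤ 0 whenever t_i = 0, and (g(t))_i ≥ n whenever t_i = 1. -/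
/-- The iterated absolute-difference function: h_1(x) = |x|,
h_{k+1}(x_1,…,x_{k+1}) = |h_k(x_1,…,x_k) - x_{k+1}|. -/
noncomputable def iterAbs : (k : ℕ) → (Fin k → ℝ) → ℝ
  | 0, _ => 0
  | (k + 1), x => |iterAbs k (fun j => x j.castSucc) - x (Fin.last k)|

lemma iterAbs_continuous (k : ℕ) : Continuous (iterAbs k) := by
  induction k with
  | zero =>
    have : iterAbs 0 = fun _ => (0 : ℝ) := rfl
    rw [this]; exact continuous_const
  | succ k ih =>
    have : iterAbs (k + 1) =
        fun x => |iterAbs k (fun j => x j.castSucc) - x (Fin.last k)| := rfl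
    rw [this]
    exact ((ih.comp (continuous_pi fun j => continuous_apply _)).sub
      (continuous_apply _)).abs

lemma iterAbs_mem (k : ℕ) (n : ℝ) (hn : 0 ≤ n) (x : Fin k → ℝ)
    (hx : ∀ j, x j ∈ Set.Icc 0 n) : iterAbs k x ∈ Set.Icc 0 n := by
  induction k with
  | zero => simpa [iterAbs] using hn
  | succ k ih =>
    have h1 := ih (fun j => x j.castSucc) (fun j => hx _)
    have h2 := hx (Fin.last k)
    simp only [Set.mem_Icc] at h1 h2 ⊢
    show (0 : ℝ) ≤ |iterAbs k (fun j => x j.castSucc) - x (Fin.last k)| ∧ _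
    refine ⟨abs_nonneg _, ?_⟩
    show |iterAbs k (fun j => x j.castSucc) - x (Fin.last k)| ≤ n
    rw [abs_le]; constructor <;> linarith [h1.1, h1.2, h2.1, h2.2]

/-- dimension is d+1 ≥ 2.  Given continuous curves c^{(j)} with
-n = (c^{(j)}(0))_j ≤ (c^{(j)}(s))_j ≤ (c^{(j)}(1))_j = n and (c^{(j)}(s))_i ∈ [0,n]
for i ≠ j, the function g with (g t)_i = (c^{(i)}(t_i))_i + h_d(off-diagonal entries)
is continuous on the cube, with (g t)_i ≤ 0 when t_i = 0 and (g t)_i ≥ n when t_i = 1. -/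
theorem g_continuous_and_boundary (d n : ℕ) (hd : 1 ≤ d) (hn : 1 ≤ n)
    (c : Fin (d + 1) → ℝ → (Fin (d + 1) → ℝ))
    (hcont : ∀ j, ContinuousOn (c j) (Set.Icc 0 1))
    (h0 : ∀ j, c j 0 j = -(n : ℝ)) (h1 : ∀ j, c j 1 j = (n : ℝ))
    (hmono : ∀ j, ∀ s ∈ Set.Icc (0 : ℝ) 1, c j 0 j ≤ c j s j ∧ c j s j ≤ c j 1 j)
    (hoff : ∀ j i, i ≠ j → ∀ s ∈ Set.Icc (0 : ℝ) 1, c j s i ∈ Set.Icc (0 : ℝ) n)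
    (g : (Fin (d + 1) → ℝ) → (Fin (d + 1) → ℝ))
    (hg : ∀ t i, g t i =
      c i (t i) i + iterAbs d (fun j => c (i.succAbove j) (t (i.succAbove j)) i)) :
    ContinuousOn g (Set.Icc 0 1) ∧
      ∀ t ∈ Set.Icc (0 : Fin (d + 1) → ℝ) 1, ∀ i,
        (t i = 0 → g t i ≤ 0) ∧ (t i = 1 → (n : ℝ) ≤ g t i) := by
  have hmaps : ∀ (k : Fin (d + 1)), ∀ t ∈ Set.Icc (0 : Fin (d + 1) → ℝ) 1,
      t k ∈ Set.Icc (0 : ℝ) 1 := by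
    intro k t ht
    exact ⟨ht.1 k, ht.2 k⟩
  constructor
  · rw [continuousOn_pi]
    intro i
    apply ContinuousOn.congr (f := fun t =>
      c i (t i) i + iterAbs d (fun j => c (i.succAbove j) (t (i.succAbove j)) i))
      ?_ (fun t _ => hg t i)
    apply ContinuousOn.add
    · exact ((continuous_apply i).comp_continuousOn (hcont i)).comp
        (continuous_apply i).continuousOn (hmaps i)
    · exact ((iterAbs_continuous d).comp_continuousOn
        (continuousOn_pi.mpr fun j =>
          ((continuous_apply i).comp_continuousOn (hcont (i.succAbove j))).comp
            (continuous_apply (i.succAbove j)).continuousOn (hmaps _)))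
  · intro t ht i
    have hnn : (0 : ℝ) ≤ n := by positivity
    have hx : ∀ j : Fin d, c (i.succAbove j) (t (i.succAbove j)) i ∈ Set.Icc (0 : ℝ) n :=
      fun j => hoff _ i (Fin.succAbove_ne i j).symm _ (hmaps _ t ht)
    have hmem := iterAbs_mem d n hnn _ hx
    constructor
    · intro h0t
      rw [hg]
      rw [h0t, h0 i]
      linarith [hmem.2]
    · intro h1t
      rw [hg, h1t, h1 i]
      linarith [hmem.1]
end

section
/- Let d ≥ 2, n ≥ 1, and let curves c^{(j)} and the function g : [0,1]^d → ℝ^d be as in the construction: each c^{(j)} : [0,1] → ℝ^d is continuous with -n = (c^{(j)}(0))_j ≤ (c^{(j)}(s))_j ≤ (c^{(j)}(1))_j = n and (c^{(j)}(s))_i ∈ [0,n] for i ≠ j; and (g(t))_i = C_{i,i}(t) + h_{d-1}(C_{i,1}(t),…,C_{i,i-1}(t),C_{i,i+1}(t),…,C_{i,d}(t)) with C_{i,j}(t) = (c^{(j)}(t_j))_i. Then for every t ∈ [0,1]^d there exist signs a_{ij}(t) ∈ {-1,1} with a_{ii}(t)=1 such that g(t) = Σ_{j=1}^d ilde c^{(j)}(t_j),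 where ( ilde c^{(j)}(t_j))_i = a_{ij}(t)·C_{i,j}(t), and every partial sum Σ_{j=1}^k ilde c^{(j)}(t_j) (k = 1,…,d) lies in the box [-2n, 2n]^d. -/
lemma iterAbs_nonneg : ∀ (k : ℕ) (x : Fin k → ℝ), 0 ≤ iterAbs k x := by
  intro k x
  cases k with
  | zero => simp [iterAbs]
  | succ k => exact abs_nonneg _

lemma iterAbs_le {B : ℝ} (hB : 0 ≤ B) :
    ∀ (k : ℕ) (x : Fin k → ℝ), (∀ j, x j ∈ Set.Icc 0 B) → iterAbs k x ≤ B := by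
  intro k
  induction k with
  | zero => intro x _; simpa [iterAbs]
  | succ k ih =>
    intro x hx
    have h1 := ih (fun j => x j.castSucc) (fun j => hx _)
    have h2 := iterAbs_nonneg k (fun j => x j.castSucc)
    have h3 := hx (Fin.last k)
    rw [iterAbs, abs_le]
    constructor <;> [skip; skip] <;> simp only [Set.mem_Icc] at h3 <;> linarith [h3.1, h3.2]

lemma iterAbs_signs {B : ℝ} (hB : 0 ≤ B) :
    ∀ (k : ℕ) (x : Fin k → ℝ), (∀ j, x j ∈ Set.Icc 0 B) →
    ∃ b : Fin k → ℝ, (∀ j, b j = 1 ∨ b j = -1) ∧ iterAbs k x = ∑ j, b j * x j ∧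
      ∀ m : ℕ, m ≤ k → |∑ j : Fin k, if (j : ℕ) < m then b j * x j else 0| ≤ B := by
  intro k
  induction k with
  | zero =>
    intro x _
    exact ⟨fun _ => 1, fun j => Or.inl rfl, by simp [iterAbs], by intro m hm; simpa⟩
  | succ k ih =>
    intro x hx
    set xc : Fin k → ℝ := fun j => x j.castSucc with hxc
    obtain ⟨b, hb1, hb2, hb3⟩ := ih xc (fun j => hx _)
    set h : ℝ := iterAbs k xc with hh
    set xl : ℝ := x (Fin.last k) with hxl
    set ε : ℝ := if xl ≤ h then 1 else -1 with hε
    have hεs : ε = 1 ∨ ε = -1 := by unfold ε; split <;> simp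
    have hεabs : ε * (h - xl) = |h - xl| := by
      unfold ε; split
      · rw [abs_of_nonneg (by linarith)]; ring
      · rw [abs_of_neg (by linarith)]; ring
    set b' : Fin (k + 1) → ℝ := fun j => if hj : (j : ℕ) < k then ε * b ⟨j, hj⟩ else -ε
      with hb'
    have hcs : ∀ j : Fin k, b' j.castSucc = ε * b j := by
      intro j
      have : ((j.castSucc : Fin (k+1)) : ℕ) < k := j.isLt
      simp only [hb', dif_pos this]
      exact congrArg (ε * b ·) (Fin.ext rfl)
    have hlast : b' (Fin.last k) = -ε := by simp [hb']
    have hsum : iterAbs (k + 1) x = ∑ j, b' j * x j := by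
      rw [Fin.sum_univ_castSucc]
      simp only [hcs, hlast]
      rw [iterAbs, ← hεabs, ← hxl]
      have : ∑ j : Fin k, ε * b j * x j.castSucc = ε * ∑ j, b j * xc j := by
        rw [Finset.mul_sum]; apply Finset.sum_congr rfl; intro j _; unfold xc; ring
      rw [this, ← hb2]; ring
    refine ⟨b', fun j => ?_, hsum, ?_⟩
    · unfold b'; split
      · rcases hεs with h1 | h1 <;> rcases hb1 ⟨j, by assumption⟩ with h2 | h2 <;>
          rw [h1, h2] <;> norm_num
      · rcases hεs with h1 | h1 <;> rw [h1] <;> norm_num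
    · intro m hm
      rcases Nat.lt_or_ge m (k + 1) with hmk | hmk
      · have hmk' : m ≤ k := by omega
        rw [Fin.sum_univ_castSucc]
        have hklt : ¬ ((Fin.last k : Fin (k+1)) : ℕ) < m := by simp [Fin.last]; omega
        rw [if_neg hklt, add_zero]
        have : ∑ j : Fin k, (if ((j.castSucc : Fin (k+1)) : ℕ) < m then b' j.castSucc * x j.castSucc else 0)
            = ε * ∑ j : Fin k, (if ((j : Fin k) : ℕ) < m then b j * xc j else 0) := by
          rw [Finset.mul_sum]
          apply Finset.sum_congr rfl
          intro j _
          simp only [Fin.coe_castSucc, hcs]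
          split <;> [ring; ring]
        rw [this, abs_mul]
        have : |ε| = 1 := by rcases hεs with h1 | h1 <;> rw [h1] <;> norm_num
        rw [this, one_mul]
        exact hb3 m hmk'
      · have hm' : m = k + 1 := by omega
        have heq : (∑ j : Fin (k+1), if ((j : Fin (k+1)) : ℕ) < m then b' j * x j else 0)
            = ∑ j, b' j * x j :=
          Finset.sum_congr rfl (fun j _ => if_pos (by omega))
        rw [heq, ← hsum, abs_of_nonneg (iterAbs_nonneg _ _)]
        exact iterAbs_le hB _ x hx

lemma succAbove_val_lt {d : ℕ} (i : Fin (d + 1)) (j : Fin d) (k : ℕ) :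
    ((i.succAbove j : Fin (d + 1)) : ℕ) < k ↔
      (j : ℕ) < (if (i : ℕ) < k then k - 1 else k) := by
  rcases lt_or_ge (j.castSucc : Fin (d+1)) i with hcase | hcase
  · rw [Fin.succAbove_of_castSucc_lt _ _ hcase]
    have : (j : ℕ) < (i : ℕ) := hcase
    simp only [Fin.coe_castSucc]
    split <;> omega
  · rw [Fin.succAbove_of_le_castSucc _ _ hcase]
    have : (i : ℕ) ≤ (j : ℕ) := hcase
    simp only [Fin.val_succ]
    split <;> omega

/-- dimension is d+1 ≥ 2.  With curves c^{(j)} and g as in the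
construction, for every t in the cube there are signs a_{ij} ∈ {-1,1} with a_{ii} = 1
such that (g t)_i = Σ_j a_{ij}·C_{ij}(t) where C_{ij}(t) = (c^{(j)}(t_j))_i, and every
partial sum (over j < k) of the signed columns lies in [-2n, 2n]^{d+1}. -/
theorem g_signed_decomposition (d n : ℕ) (hd : 1 ≤ d) (hn : 1 ≤ n)
    (c : Fin (d + 1) → ℝ → (Fin (d + 1) → ℝ))
    (hcont : ∀ j, ContinuousOn (c j) (Set.Icc 0 1))
    (h0 : ∀ j, c j 0 j = -(n : ℝ)) (h1 : ∀ j, c j 1 j = (n : ℝ))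
    (hmono : ∀ j, ∀ s ∈ Set.Icc (0 : ℝ) 1, c j 0 j ≤ c j s j ∧ c j s j ≤ c j 1 j)
    (hoff : ∀ j i, i ≠ j → ∀ s ∈ Set.Icc (0 : ℝ) 1, c j s i ∈ Set.Icc (0 : ℝ) n)
    (g : (Fin (d + 1) → ℝ) → (Fin (d + 1) → ℝ))
    (hg : ∀ t i, g t i =
      c i (t i) i + iterAbs d (fun j => c (i.succAbove j) (t (i.succAbove j)) i)) :
    ∀ t ∈ Set.Icc (0 : Fin (d + 1) → ℝ) 1,
      ∃ a : Fin (d + 1) → Fin (d + 1) → ℝ,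
        (∀ i j, a i j = 1 ∨ a i j = -1) ∧ (∀ i, a i i = 1) ∧
        (∀ i, g t i = ∑ j, a i j * c j (t j) i) ∧
        (∀ k : ℕ, k ≤ d + 1 → ∀ i,
          |∑ j ∈ Finset.univ.filter (fun j : Fin (d + 1) => (j : ℕ) < k),
              a i j * c j (t j) i| ≤ 2 * (n : ℝ)) := by
  intro t ht
  have htj : ∀ j, t j ∈ Set.Icc (0 : ℝ) 1 := fun j => ⟨ht.1 j, ht.2 j⟩
  have hnn : (0 : ℝ) ≤ n := by positivity
  have hx : ∀ i : Fin (d + 1), ∀ j : Fin d,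
      c (i.succAbove j) (t (i.succAbove j)) i ∈ Set.Icc (0 : ℝ) n := by
    intro i j
    exact hoff (i.succAbove j) i (Fin.succAbove_ne i j).symm _ (htj _)
  have H : ∀ i : Fin (d + 1), ∃ b : Fin d → ℝ,
      (∀ j, b j = 1 ∨ b j = -1) ∧
      iterAbs d (fun j => c (i.succAbove j) (t (i.succAbove j)) i)
        = ∑ j, b j * c (i.succAbove j) (t (i.succAbove j)) i ∧
      ∀ m : ℕ, m ≤ d →
        |∑ j : Fin d, if (j : ℕ) < m then b j * c (i.succAbove j) (t (i.succAbove j)) i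
          else 0| ≤ (n : ℝ) :=
    fun i => iterAbs_signs hnn d _ (hx i)
  choose b hb1 hb2 hb3 using H
  set a : Fin (d + 1) → Fin (d + 1) → ℝ :=
    fun i => Function.extend (Fin.succAbove i) (b i) 1 with ha
  have hnotin : ∀ i : Fin (d + 1), ¬ ∃ j, i.succAbove j = i :=
    fun i ⟨j, hj⟩ => Fin.succAbove_ne i j hj
  have hdiag : ∀ i, a i i = 1 := by
    intro i
    rw [ha]
    exact Function.extend_apply' _ _ _ (hnotin i)
  have hoffd : ∀ i j, a i (i.succAbove j) = b i j := by
    intro i j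
    rw [ha]
    exact Function.Injective.extend_apply (Fin.succAbove_right_injective) _ _ _
  have hdiagbd : ∀ i : Fin (d + 1), |c i (t i) i| ≤ (n : ℝ) := by
    intro i
    have h := hmono i (t i) (htj i)
    rw [h0 i] at h
    rw [h1 i] at h
    rw [abs_le]
    exact ⟨h.1, h.2⟩
  refine ⟨a, ?_, hdiag, ?_, ?_⟩
  · intro i j
    by_cases hji : j = i
    · subst hji; rw [hdiag]; exact Or.inl rfl
    · obtain ⟨j', rfl⟩ := Fin.exists_succAbove_eq hji
      rw [hoffd]; exact hb1 i j'
  · intro i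
    rw [hg t i, Fin.sum_univ_succAbove (fun j => a i j * c j (t j) i) i, hdiag i,
      one_mul, hb2 i]
    congr 1
    exact Finset.sum_congr rfl fun j _ => by rw [hoffd]
  · intro k hk i
    rw [Finset.sum_filter,
      Fin.sum_univ_succAbove (fun j => if (j : ℕ) < k then a i j * c j (t j) i else 0) i]
    set m : ℕ := if (i : ℕ) < k then k - 1 else k with hm
    have hmd : m ≤ d := by
      have := i.isLt
      rw [hm]; split <;> omega
    have hsum2 : ∑ j : Fin d,
        (if ((i.succAbove j : Fin (d+1)) : ℕ) < k then a i (i.succAbove j) * c (i.succAbove j) (t (i.succAbove j)) i else 0)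
        = ∑ j : Fin d, (if (j : ℕ) < m then b i j * c (i.succAbove j) (t (i.succAbove j)) i else 0) := by
      apply Finset.sum_congr rfl
      intro j _
      rw [hoffd]
      by_cases hc : ((i.succAbove j : Fin (d+1)) : ℕ) < k
      · rw [if_pos hc, if_pos ((succAbove_val_lt i j k).mp hc)]
      · rw [if_neg hc, if_neg (fun hcc => hc ((succAbove_val_lt i j k).mpr hcc))]
    rw [hsum2]
    have h2 := hb3 i m hmd
    have h3 : |if (i : ℕ) < k then a i i * c i (t i) i else 0| ≤ (n : ℝ) := by
      split
      · rw [hdiag, one_mul]; exact hdiagbd i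
      · simpa using hnn
    calc |_| ≤ |if (i : ℕ) < k then a i i * c i (t i) i else 0| +
        |∑ j : Fin d, (if (j : ℕ) < m then b i j * c (i.succAbove j) (t (i.succAbove j)) i else 0)| :=
          abs_add_le _ _
      _ ≤ (n : ℝ) + (n : ℝ) := add_le_add h3 h2
      _ = 2 * (n : ℝ) := by ring
end

section
/- Let μ be a probability measure on {0,1}^{ℤ^d} satisfying the FKG inequality for increasing events and translation invariance. Suppose z^{(1)},…,z^{(d)} ∈ ℤ^d and x ∈ ℤ^d are such that each partial sum Σ_{j=1}^k z^{(j)} lies in Λ(3n) for k ≤ d, ‖x − Σ_{j=1}^d z^{(j)}‖_1 ≤ d/2, x ∈ Λ(n), 3n + d/2 < 4n, and for each j, μ(0 ↔ z^{(j)} in Λ(n)) ≥ 1/(2n+1)^d. If additionally μ(e is open) = p for each site e with p > 0, then μ(0 ↔ x in Λ(4n)) ≥ (2n+1)^{-d²} · p^{d/2}. -/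
/-- A site percolation configuration on ℤ^d. -/
abbrev Config (d : ℕ) := (Fin d → ℤ) → Bool

/-- An increasing event: stable under turning more sites open. -/
def IncreasingEvent {d : ℕ} (A : Set (Config d)) : Prop :=
  ∀ ω ω' : Config d, (∀ e, ω e = true → ω' e = true) → ω ∈ A → ω' ∈ A

/-- The event that 0 is connected to y by a nearest-neighbour path of open sites all of
whose sites lie in B. -/
def ConnEvent {d : ℕ} (y : Fin d → ℤ) (B : Set (Fin d → ℤ)) : Set (Config d) :=
  {ω | ∃ (k : ℕ) (v : ℕ → Fin d → ℤ), v 0 = 0 ∧ v k = y ∧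
    (∀ m ≤ k, v m ∈ B ∧ ω (v m) = true) ∧
    ∀ m < k, (∑ i, |v (m + 1) i - v m i|) = 1}

/-- The box Λ(n) = [-n,n]^d. -/
def box (d n : ℕ) : Set (Fin d → ℤ) := {v | ∀ i, |v i| ≤ (n : ℤ)}

def Conn {d : ℕ} (a b : Fin d → ℤ) (B : Set (Fin d → ℤ)) : Set (Config d) :=
  {ω | ∃ (k : ℕ) (v : ℕ → Fin d → ℤ), v 0 = a ∧ v k = b ∧
    (∀ m ≤ k, v m ∈ B ∧ ω (v m) = true) ∧
    ∀ m < k, (∑ i, |v (m + 1) i - v m i|) = 1}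

lemma connEvent_eq {d : ℕ} (y : Fin d → ℤ) (B : Set (Fin d → ℤ)) :
    ConnEvent y B = Conn 0 y B := rfl

lemma conn_incr {d : ℕ} (a b : Fin d → ℤ) (B : Set (Fin d → ℤ)) :
    IncreasingEvent (Conn a b B) := by
  rintro ω ω' h ⟨k, v, h0, hk, hmem, hstep⟩
  exact ⟨k, v, h0, hk, fun m hm => ⟨(hmem m hm).1, h _ (hmem m hm).2⟩, hstep⟩

lemma conn_mono {d : ℕ} (a b : Fin d → ℤ) {B B' : Set (Fin d → ℤ)} (h : B ⊆ B') :
    Conn a b B ⊆ Conn a b B' := by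
  rintro ω ⟨k, v, h0, hk, hmem, hstep⟩
  exact ⟨k, v, h0, hk, fun m hm => ⟨h (hmem m hm).1, (hmem m hm).2⟩, hstep⟩

lemma conn_endpoint {d : ℕ} {a b : Fin d → ℤ} {B : Set (Fin d → ℤ)} {ω : Config d}
    (h : ω ∈ Conn a b B) : ω b = true := by
  obtain ⟨k, v, h0, hk, hmem, hstep⟩ := h
  have := (hmem k le_rfl).2
  rwa [hk] at this

lemma conn_concat {d : ℕ} {a b c : Fin d → ℤ} {B1 B2 : Set (Fin d → ℤ)} {ω : Config d}
    (h1 : ω ∈ Conn a b B1) (h2 : ω ∈ Conn b c B2) : ω ∈ Conn a c (B1 ∪ B2) := by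
  obtain ⟨k1, v1, h10, h1k, hmem1, hstep1⟩ := h1
  obtain ⟨k2, v2, h20, h2k, hmem2, hstep2⟩ := h2
  refine ⟨k1 + k2, fun m => if m ≤ k1 then v1 m else v2 (m - k1), by simp [h10], ?_, ?_, ?_⟩
  · by_cases h : k2 = 0
    · subst h; simp [h1k, ← h20, h2k]
    · have : ¬ (k1 + k2 ≤ k1) := by omega
      simp [this, h2k]
  · intro m hm
    by_cases h : m ≤ k1
    · simpa [h] using ⟨Or.inl (hmem1 m h).1, (hmem1 m h).2⟩
    · have hm2 : m - k1 ≤ k2 := by omega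
      simpa [h] using ⟨Or.inr (hmem2 _ hm2).1, (hmem2 _ hm2).2⟩
  · intro m hm
    rcases lt_or_ge m k1 with h | h
    · have h1 : m ≤ k1 := by omega
      have h2 : m + 1 ≤ k1 := by omega
      simpa [h1, h2] using hstep1 m h
    · have h1 : ¬ (m + 1 ≤ k1) := by omega
      have hv : (if m ≤ k1 then v1 m else v2 (m - k1)) = v2 (m - k1) := by
        rcases eq_or_lt_of_le h with h' | h'
        · simp [← h', h1k, h20]
        · simp [show ¬ (m ≤ k1) by omega]
      simp only []
      rw [hv]
      simp only [h1, if_false]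
      have : m + 1 - k1 = (m - k1) + 1 := by omega
      rw [this]
      exact hstep2 _ (by omega)

lemma conn_preimage {d : ℕ} (t a b : Fin d → ℤ) (B : Set (Fin d → ℤ)) :
    (fun ω : Config d => fun e => ω (e + t)) ⁻¹' Conn a b B
      = Conn (a + t) (b + t) ((· + t) '' B) := by
  ext ω
  constructor
  · rintro ⟨k, v, h0, hk, hmem, hstep⟩
    refine ⟨k, fun m => v m + t, by simp [h0], by simp [hk], ?_, ?_⟩
    · intro m hm
      exact ⟨⟨v m, (hmem m hm).1, rfl⟩, (hmem m hm).2⟩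
    · intro m hm
      simpa using hstep m hm
  · rintro ⟨k, w, h0, hk, hmem, hstep⟩
    refine ⟨k, fun m => w m - t, by simp [h0], by simp [hk], ?_, ?_⟩
    · intro m hm
      obtain ⟨s, hs, hst⟩ := (hmem m hm).1
      refine ⟨by simpa [← hst] using hs, ?_⟩
      simpa using (hmem m hm).2
    · intro m hm
      simpa using hstep m hm


lemma path_exists_aux {d : ℕ} (N : ℕ) : ∀ (a b : Fin d → ℤ),
    (∑ i, (b i - a i).natAbs) = N →
    ∃ v : ℕ → Fin d → ℤ, v 0 = a ∧ v N = b ∧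
      (∀ m < N, ∑ i, |v (m + 1) i - v m i| = 1) ∧
      (∀ m, ∀ i, |v m i| ≤ max |a i| |b i|) := by
  induction N with
  | zero =>
    intro a b hab
    have hab' : a = b := by
      funext i
      have : (b i - a i).natAbs = 0 :=
        Finset.sum_eq_zero_iff.mp hab i (Finset.mem_univ i)
      omega
    subst hab'
    exact ⟨fun _ => a, rfl, rfl, fun m hm => by omega, fun m i => le_max_left _ _⟩
  | succ N ih =>
    intro a b hab
    have hex : ∃ i₀ : Fin d, (b i₀ - a i₀).natAbs ≠ 0 := by
      by_contra h
      push_neg at h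
      have : (∑ i, (b i - a i).natAbs) = 0 := Finset.sum_eq_zero fun i _ => h i
      omega
    obtain ⟨i₀, hi₀⟩ := hex
    set δ : ℤ := if a i₀ < b i₀ then 1 else -1 with hδ
    set a' : Fin d → ℤ := Function.update a i₀ (a i₀ + δ) with ha'
    have hterm : (b i₀ - a' i₀).natAbs + 1 = (b i₀ - a i₀).natAbs := by
      rw [ha', Function.update_self, hδ]
      rcases lt_or_ge (a i₀) (b i₀) with h | h
      · simp only [if_pos h]; omega
      · have : a i₀ ≠ b i₀ := by omega
        simp only [if_neg (by omega : ¬ a i₀ < b i₀)]; omega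
    have hsum' : (∑ i, (b i - a' i).natAbs) = N := by
      have h1 : (∑ i, (b i - a' i).natAbs)
          = ∑ i ∈ Finset.univ \ {i₀}, (b i - a' i).natAbs + (b i₀ - a' i₀).natAbs :=
        (Finset.sum_eq_sum_sdiff_singleton_add (Finset.mem_univ i₀) _)
      have h2 : (∑ i, (b i - a i).natAbs)
          = ∑ i ∈ Finset.univ \ {i₀}, (b i - a i).natAbs + (b i₀ - a i₀).natAbs :=
        (Finset.sum_eq_sum_sdiff_singleton_add (Finset.mem_univ i₀) _)
      have h3 : ∑ i ∈ Finset.univ \ {i₀}, (b i - a' i).natAbs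
          = ∑ i ∈ Finset.univ \ {i₀}, (b i - a i).natAbs := by
        refine Finset.sum_congr rfl fun i hi => ?_
        have : i ≠ i₀ := by simpa using (Finset.mem_sdiff.mp hi).2
        rw [ha', Function.update_of_ne this]
      omega
    obtain ⟨v', h0', hN', hstep', hbet'⟩ := ih a' b hsum'
    refine ⟨fun m => if m = 0 then a else v' (m - 1), rfl, by simp [hN'], ?_, ?_⟩
    · intro m hm
      match m with
      | 0 =>
        simp only [if_pos rfl, if_neg (Nat.one_ne_zero)]
        simp only [Nat.sub_self]
        rw [h0']
        rw [Finset.sum_eq_single i₀]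
        · rw [ha', Function.update_self, hδ]
          rcases lt_or_ge (a i₀) (b i₀) with h | h
          · simp [if_pos h]
          · simp [if_neg (by omega : ¬ a i₀ < b i₀)]
        · intro i _ hi
          rw [ha', Function.update_of_ne hi]; simp
        · simp
      | m + 1 =>
        simp only [if_neg (Nat.succ_ne_zero _), Nat.add_sub_cancel]
        exact hstep' m (by omega)
    · intro m i
      match m with
      | 0 => simp
      | m + 1 =>
        simp only [if_neg (Nat.succ_ne_zero _), Nat.add_sub_cancel]
        refine le_trans (hbet' m i) ?_
        rcases eq_or_ne i i₀ with h | h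
        · subst h
          rw [ha', Function.update_self]
          have h1 : |a i + δ| ≤ max |a i| |b i| := by
            rw [Int.abs_eq_natAbs, Int.abs_eq_natAbs, Int.abs_eq_natAbs, hδ]
            rcases lt_or_ge (a i) (b i) with h | h
            · simp only [if_pos h]; omega
            · have : a i ≠ b i := by
                intro he; rw [he] at hi₀; simp at hi₀
              simp only [if_neg (by omega : ¬ a i < b i)]; omega
          exact max_le h1 (le_max_right _ _)
        · rw [ha', Function.update_of_ne h]

lemma path_exists {d : ℕ} (a b : Fin d → ℤ) :
    ∃ v : ℕ → Fin d → ℤ, v 0 = a ∧ v (∑ i, (b i - a i).natAbs) = b ∧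
      (∀ m < ∑ i, (b i - a i).natAbs, ∑ i, |v (m + 1) i - v m i| = 1) ∧
      (∀ m, ∀ i, |v m i| ≤ max |a i| |b i|) :=
  path_exists_aux _ a b rfl

/-- for a translation-invariant probability measure satisfying the FKG
inequality, if the partial sums of z^{(1)},…,z^{(d)} stay in Λ(3n), x ∈ Λ(n) is within
ℓ¹-distance d/2 of Σ_j z^{(j)}, 3n + d/2 < 4n, each connection 0 ↔ z^{(j)} in Λ(n) has
probability ≥ 1/(2n+1)^d, and each site is open with probability p > 0, then
μ(0 ↔ x in Λ(4n)) ≥ (2n+1)^{-d²}·p^{d/2}. -/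
theorem connection_lower_bound (d n : ℕ) (hd : 2 ≤ d) (hn : 1 ≤ n)
    (μ : MeasureTheory.Measure (Config d)) [MeasureTheory.IsProbabilityMeasure μ]
    (hFKG : ∀ A B : Set (Config d), IncreasingEvent A → IncreasingEvent B →
      μ A * μ B ≤ μ (A ∩ B))
    (htrans : ∀ (t : Fin d → ℤ) (A : Set (Config d)),
      μ ((fun ω : Config d => fun e => ω (e + t)) ⁻¹' A) = μ A)
    (z : Fin d → Fin d → ℤ) (x : Fin d → ℤ)
    (hpart : ∀ k : ℕ, k ≤ d → ∀ i,
      |∑ j ∈ Finset.univ.filter (fun j : Fin d => (j : ℕ) < k), z j i| ≤ 3 * (n : ℤ))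
    (hx1 : (∑ i, |(x i : ℝ) - ∑ j, (z j i : ℝ)|) ≤ (d : ℝ) / 2)
    (hx2 : ∀ i, |x i| ≤ (n : ℤ))
    (hn4 : 3 * (n : ℝ) + (d : ℝ) / 2 < 4 * n)
    (p : ℝ) (hp : 0 < p) (hp1 : p ≤ 1)
    (hsite : ∀ e : Fin d → ℤ, μ {ω : Config d | ω e = true} = ENNReal.ofReal p)
    (hz : ∀ j, ENNReal.ofReal (1 / (2 * (n : ℝ) + 1) ^ d) ≤
      μ (ConnEvent (z j) (box d n))) :
    ENNReal.ofReal ((1 / (2 * (n : ℝ) + 1) ^ (d ^ 2)) * p ^ ((d : ℝ) / 2)) ≤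
      μ (ConnEvent x (box d (4 * n))) := by
    classical
  set c : ENNReal := ENNReal.ofReal (1 / (2 * (n : ℝ) + 1) ^ d) with hc
  set Λ4 : Set (Fin d → ℤ) := box d (4 * n) with hL4
  set s : ℕ → Fin d → ℤ :=
    fun k i => ∑ j ∈ Finset.univ.filter (fun j : Fin d => (j : ℕ) < k), z j i with hs
  have hsbound : ∀ k, k ≤ d → ∀ i, |s k i| ≤ 3 * (n : ℤ) := fun k hk i => hpart k hk i
  have hssucc : ∀ k (hk : k < d), s (k + 1) = z ⟨k, hk⟩ + s k := by
    intro k hk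
    funext i
    show (∑ j ∈ Finset.univ.filter (fun j : Fin d => (j : ℕ) < k + 1), z j i) = _
    have hins : Finset.univ.filter (fun j : Fin d => (j : ℕ) < k + 1)
        = insert (⟨k, hk⟩ : Fin d) (Finset.univ.filter (fun j : Fin d => (j : ℕ) < k)) := by
      ext j
      simp only [Finset.mem_filter, Finset.mem_univ, true_and, Finset.mem_insert, Fin.ext_iff]
      omega
    rw [hins, Finset.sum_insert (by simp)]
    rfl
  have hEk : ∀ k (hk : k < d), c ≤ μ (Conn (s k) (s (k + 1)) Λ4) := by
    intro k hk
    have h1 : c ≤ μ (Conn 0 (z ⟨k, hk⟩) (box d n)) := hz _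
    have h2 := htrans (s k) (Conn 0 (z ⟨k, hk⟩) (box d n))
    rw [conn_preimage] at h2
    have h3 : ((· + s k) '' box d n) ⊆ Λ4 := by
      rintro u ⟨w, hw, rfl⟩ i
      have hwi : |w i| ≤ (n : ℤ) := hw i
      have hski := hsbound k hk.le i
      have habs := abs_add_le (w i) (s k i)
      show |(w + s k) i| ≤ ((4 * n : ℕ) : ℤ)
      simp only [Pi.add_apply]
      push_cast
      linarith
    calc c ≤ μ (Conn 0 (z ⟨k, hk⟩) (box d n)) := h1
    _ = μ (Conn (0 + s k) (z ⟨k, hk⟩ + s k) ((· + s k) '' box d n)) := h2.symm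
    _ ≤ μ (Conn (s k) (s (k + 1)) Λ4) := by
        rw [zero_add, hssucc k hk]
        exact MeasureTheory.measure_mono (conn_mono _ _ h3)
  have hchain : ∀ k, 1 ≤ k → k ≤ d → c ^ k ≤ μ (Conn 0 (s k) Λ4) := by
    intro k
    induction k with
    | zero => intro h; omega
    | succ k ih =>
      intro _ hk
      rcases Nat.eq_zero_or_pos k with h | h
      · subst h
        have h0 : s 0 = 0 := by
          funext i
          simp [hs]
        have hE := hEk 0 (by omega)
        rw [h0] at hE
        simpa using hE
      · have h1 := ih h (by omega)
        have h2 := hEk k (by omega)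
        calc c ^ (k + 1) = c ^ k * c := pow_succ c k
        _ ≤ μ (Conn 0 (s k) Λ4) * μ (Conn (s k) (s (k + 1)) Λ4) := mul_le_mul' h1 h2
        _ ≤ μ (Conn 0 (s k) Λ4 ∩ Conn (s k) (s (k + 1)) Λ4) :=
            hFKG _ _ (conn_incr _ _ _) (conn_incr _ _ _)
        _ ≤ μ (Conn 0 (s (k + 1)) Λ4) := by
            refine MeasureTheory.measure_mono ?_
            rintro ω ⟨h3, h4⟩
            have h5 := conn_concat h3 h4
            rwa [Set.union_self] at h5
  obtain ⟨v, hv0, hvN, hvstep, hvbet⟩ := path_exists (s d) x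
  set N := ∑ i, (x i - s d i).natAbs with hN
  have hsd : ∀ i, s d i = ∑ j, z j i := by
    intro i
    have : Finset.univ.filter (fun j : Fin d => (j : ℕ) < d) = Finset.univ := by
      ext j; simp [j.isLt]
    simp only [hs]
    rw [this]
  have hNle : (N : ℝ) ≤ (d : ℝ) / 2 := by
    have hcast : (N : ℝ) = ∑ i, |(x i : ℝ) - ∑ j, (z j i : ℝ)| := by
      rw [hN]
      push_cast [Nat.cast_natAbs]
      refine Finset.sum_congr rfl fun i _ => ?_
      rw [hsd i]
      push_cast
      ring_nf
    rw [hcast]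
    exact hx1
  set S : ℕ → Set (Config d) := fun k => {ω : Config d | ∀ m < k, ω (v (m + 1)) = true}
    with hS
  have hSincr : ∀ k, IncreasingEvent (S k) := fun k ω ω' h hω m hm => h _ (hω m hm)
  have hSmeas : ∀ k, (ENNReal.ofReal p) ^ k ≤ μ (S k) := by
    intro k
    induction k with
    | zero =>
      have h0 : S 0 = Set.univ := by ext ω; simp [hS]
      simp [h0]
    | succ k ih =>
      have hsplit : S (k + 1) = S k ∩ {ω : Config d | ω (v (k + 1)) = true} := by
        ext ω
        simp only [hS, Set.mem_inter_iff, Set.mem_setOf_eq]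
        constructor
        · exact fun h => ⟨fun m hm => h m (by omega), h k (by omega)⟩
        · rintro ⟨h1, h2⟩ m hm
          rcases Nat.lt_succ_iff_lt_or_eq.mp hm with h | h
          · exact h1 m h
          · subst h; exact h2
      rw [hsplit]
      calc (ENNReal.ofReal p) ^ (k + 1)
          = (ENNReal.ofReal p) ^ k * ENNReal.ofReal p := pow_succ _ _
      _ ≤ μ (S k) * μ {ω : Config d | ω (v (k + 1)) = true} :=
          mul_le_mul' ih (le_of_eq (hsite _).symm)
      _ ≤ μ (S k ∩ {ω : Config d | ω (v (k + 1)) = true}) :=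
          hFKG _ _ (hSincr k) (fun ω ω' h hω => h _ hω)
  have hfinal : c ^ d * (ENNReal.ofReal p) ^ N ≤ μ (Conn 0 x Λ4) := by
    calc c ^ d * (ENNReal.ofReal p) ^ N
        ≤ μ (Conn 0 (s d) Λ4) * μ (S N) :=
          mul_le_mul' (hchain d (by omega) le_rfl) (hSmeas N)
    _ ≤ μ (Conn 0 (s d) Λ4 ∩ S N) := hFKG _ _ (conn_incr _ _ _) (hSincr N)
    _ ≤ μ (Conn 0 x Λ4) := by
      refine MeasureTheory.measure_mono ?_
      rintro ω ⟨h1, h2⟩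
      have h3 : ω ∈ Conn (s d) x Λ4 := by
        refine ⟨N, v, hv0, hvN, ?_, hvstep⟩
        intro m hm
        constructor
        · intro i
          show |v m i| ≤ ((4 * n : ℕ) : ℤ)
          have hb := hvbet m i
          have h4 := hsbound d le_rfl i
          have h5 := hx2 i
          have h6 : max |s d i| |x i| ≤ 3 * (n : ℤ) :=
            max_le h4 (h5.trans (by push_cast; linarith [Int.ofNat_nonneg n]))
          push_cast
          linarith [le_trans hb h6]
        · match m with
          | 0 => rw [hv0]; exact conn_endpoint h1
          | m + 1 => exact h2 m (by omega)
      have h7 := conn_concat h1 h3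
      rwa [Set.union_self] at h7
  rw [connEvent_eq]
  refine le_trans ?_ hfinal
  have hbpos : (0 : ℝ) < (2 * (n : ℝ) + 1) ^ d := by positivity
  have hcpow : c ^ d = ENNReal.ofReal ((1 / (2 * (n : ℝ) + 1) ^ d) ^ d) := by
    rw [hc, ← ENNReal.ofReal_pow (by positivity)]
  have hppow : (ENNReal.ofReal p) ^ N = ENNReal.ofReal (p ^ N) := by
    rw [← ENNReal.ofReal_pow hp.le]
  rw [hcpow, hppow, ← ENNReal.ofReal_mul (by positivity)]
  refine ENNReal.ofReal_le_ofReal ?_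
  have heq : (1 / (2 * (n : ℝ) + 1) ^ d) ^ d = 1 / (2 * (n : ℝ) + 1) ^ (d ^ 2) := by
    rw [div_pow, one_pow, ← pow_mul, pow_two]
  rw [heq]
  have hple : p ^ ((d : ℝ) / 2) ≤ p ^ N := by
    rw [← Real.rpow_natCast p N]
    exact Real.rpow_le_rpow_of_exponent_ge hp hp1 hNle
  refine mul_le_mul_of_nonneg_left hple (by positivity)
end
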